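/- Let X be a normed space, N ⊆ X a closed subspace, X_h ⊆ X a finite-dimensional subspace, and N_h := N ∩ X_h. Suppose R : X → X_h is a bounded linear projection (R ∘ R = R, range R = X_h) satisfying R(N) ⊆ N_h. Then for every u_h ∈ X_h, the discrete quotient norm inf_{x_h ∈ N_h} ‖u_h + x_h‖ satisfies: inf_{x ∈ N} ‖u_h + x‖ ≤ inf_{x_h ∈ N_h} ‖u_h + x_h‖ ≤ ‖R‖ · inf_{x ∈ N} ‖u_h + x‖. In particular the discrete and continuous quotient norms are equivalent on X_h with constants independent of X_h apart from ‖R‖. -/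

import Mathlib

open Set

lemma sInf_image_le_sInf_image_of_subset {α : Type*} {f : α → ℝ} (hf : ∀ x, 0 ≤ f x)
    {s t : Set α} (hs : s.Nonempty) (hst : s ⊆ t) : sInf (f '' t) ≤ sInf (f '' s) :=
  csInf_le_csInf ⟨0, by rintro _ ⟨x, -, rfl⟩; exact hf x⟩ (hs.image f) (image_mono hst)

lemma sInf_image_le_mul_sInf_image {α : Type*} {f : α → ℝ} (hf : ∀ x, 0 ≤ f x)
    {s t : Set α} (ht : t.Nonempty) {g : α → α} (hg : MapsTo g t s) {C : ℝ} (hC : 0 ≤ C)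
    (hfg : ∀ x ∈ t, f (g x) ≤ C * f x) : sInf (f '' s) ≤ C * sInf (f '' t) := by
  rw [← smul_eq_mul, ← Real.sInf_smul_of_nonneg hC]
  refine le_csInf (ht.image f).smul_set ?_
  rintro _ ⟨_, ⟨x, hx, rfl⟩, rfl⟩
  have hbdd : BddBelow (f '' s) := ⟨0, by rintro _ ⟨y, -, rfl⟩; exact hf y⟩
  exact (csInf_le hbdd (mem_image_of_mem f (hg hx))).trans (hfg x hx)

lemma ContinuousLinearMap.norm_add_apply_le_of_apply_eq {𝕜 E : Type*} [NormedAddCommGroup E]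
    [NontriviallyNormedField 𝕜] [NormedSpace 𝕜 E] (R : E →L[𝕜] E) {u : E} (hu : R u = u)
    (x : E) : ‖u + R x‖ ≤ ‖R‖ * ‖u + x‖ :=
  calc ‖u + R x‖ = ‖R (u + x)‖ := by rw [map_add, hu]
    _ ≤ ‖R‖ * ‖u + x‖ := R.le_opNorm _

theorem stmt4_general (X : Type*) [NormedAddCommGroup X] [NormedSpace ℝ X]
    (N Xh : Submodule ℝ X)
    (R : X →L[ℝ] X)
    (hproj : ∀ x, R (R x) = R x)
    (hrange : LinearMap.range (R : X →ₗ[ℝ] X) = Xh)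
    (hRN : ∀ x ∈ N, R x ∈ N ⊓ Xh) :
    ∀ u ∈ Xh,
      sInf ((fun x => ‖u + x‖) '' (N : Set X)) ≤
        sInf ((fun x => ‖u + x‖) '' ((N ⊓ Xh : Submodule ℝ X) : Set X)) ∧
      sInf ((fun x => ‖u + x‖) '' ((N ⊓ Xh : Submodule ℝ X) : Set X)) ≤
        ‖R‖ * sInf ((fun x => ‖u + x‖) '' (N : Set X)) := by
  intro u hu
  obtain ⟨v, hv⟩ : u ∈ LinearMap.range (R : X →ₗ[ℝ] X) := hrange ▸ hu
  have hRu : R u = u := hv ▸ hproj v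
  exact ⟨sInf_image_le_sInf_image_of_subset (fun _ => norm_nonneg _) ⟨0, zero_mem _⟩
      fun _ hx => hx.1,
    sInf_image_le_mul_sInf_image (fun _ => norm_nonneg _) ⟨0, N.zero_mem⟩ hRN (norm_nonneg R)
      fun x _ => R.norm_add_apply_le_of_apply_eq hRu x⟩

/-- Equivalence of discrete and continuous quotient (jump) norms: if `R : X → X` is a
bounded linear projection with range `Xh` mapping `N` into `N ⊓ Xh`, then for `u ∈ Xh`
`inf_{x ∈ N} ‖u + x‖ ≤ inf_{x ∈ N ⊓ Xh} ‖u + x‖ ≤ ‖R‖ · inf_{x ∈ N} ‖u + x‖`. -/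
theorem stmt4 (X : Type*) [NormedAddCommGroup X] [NormedSpace ℝ X]
    (N Xh : Submodule ℝ X) (hN : IsClosed (N : Set X)) [FiniteDimensional ℝ Xh]
    (R : X →L[ℝ] X)
    (hproj : ∀ x, R (R x) = R x)
    (hrange : LinearMap.range (R : X →ₗ[ℝ] X) = Xh)
    (hRN : ∀ x ∈ N, R x ∈ N ⊓ Xh) :
    ∀ u ∈ Xh,
      sInf ((fun x => ‖u + x‖) '' (N : Set X)) ≤
        sInf ((fun x => ‖u + x‖) '' ((N ⊓ Xh : Submodule ℝ X) : Set X)) ∧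
      sInf ((fun x => ‖u + x‖) '' ((N ⊓ Xh : Submodule ℝ X) : Set X)) ≤
        ‖R‖ * sInf ((fun x => ‖u + x‖) '' (N : Set X)) :=
  stmt4_general X N Xh R hproj hrange hRN
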